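/- For every l ≥ 5, define f̃_{D_l}(t) := ((l+2)/l)·f_{D_l}(t) − (2/l)·f_{B_l}(t) in ℚ[t], where f_{B_l}(t) = Σ_{k=0}^{l} (-1)^k C(l,k)·C(l+k,k)·t^k and f_{D_l}(t) = Σ_{k=0}^{l} (-1)^k (C(l,k)·C(l+k-1,k) + C(l-2,k-2)·C(l+k-2,k))·t^k. Then f̃_{D_l}(t) = (1/(l-2)!)·d^{l-3}/dt^{l-3}[t^{l-3}(1-t)^{l-3}(1-2t)·((l-2) − (3l-4)t + (3l-4)t²)]. -/

import Mathlib

/-!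
Comparing coefficients gives Rodrigues-type formulas
`fB l = (1/l!) D^l [X^l (1-X)^l]` and
`fD l = (1/(l-1)!) D^(l-1) [X^(l-1) (1-X)^l] + (1/(l-2)!) D^(l-2) [X^l (1-X)^(l-2)]`.
With `l = m + 3`, factor `D^m` out of every term of `fDtilde l`: what remains is a combination of
`D^2`, `D` and `D^3` of products `X^a (1-X)^b`, each of which is `X^m (1-X)^m` times a cubic, and
the resulting polynomial identity is checked by direct computation.
-/

open Polynomial Finset

noncomputable def fB (l : ℕ) : Polynomial ℚ :=
  ∑ k ∈ Finset.range (l + 1),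
    Polynomial.C ((-1 : ℚ) ^ k * (l.choose k) * ((l + k).choose k)) * Polynomial.X ^ k
noncomputable def fD (l : ℕ) : Polynomial ℚ :=
  ∑ k ∈ Finset.range (l + 1),
    Polynomial.C ((-1 : ℚ) ^ k *
      ((l.choose k * (l + k - 1).choose k
        + if 2 ≤ k then (l - 2).choose (k - 2) * (l + k - 2).choose k else 0 : ℕ) : ℚ)) *
      Polynomial.X ^ k

noncomputable def fDtilde (l : ℕ) : Polynomial ℚ :=
  Polynomial.C (((l : ℚ) + 2) / (l : ℚ)) * fD l - Polynomial.C (2 / (l : ℚ)) * fB l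

open scoped Nat

section CommRing

variable {R : Type*} [CommRing R]

theorem coeff_one_sub_X_pow (n k : ℕ) :
    ((1 - X : R[X]) ^ n).coeff k = (-1) ^ k * n.choose k := by
  have h : (1 - X : R[X]) ^ n = ((1 + X) ^ n).comp (C (-1) * X) := by
    simp [sub_eq_add_neg]
  rw [h, comp_C_mul_X_coeff, coeff_one_add_X_pow, mul_comm]

theorem coeff_iterate_derivative_X_pow_add_mul_one_sub_X_pow (n s b k : ℕ) :
    (derivative^[n] (X ^ (n + s) * (1 - X : R[X]) ^ b)).coeff k =
      if s ≤ k then (-1 : R) ^ (k - s) * b.choose (k - s) * (n ! * (k + n).choose n) else 0 := by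
  rw [coeff_iterate_derivative, coeff_X_pow_mul', Nat.descFactorial_eq_factorial_mul_choose]
  split_ifs with hsn hs hs
  · rw [coeff_one_sub_X_pow, show k + n - (n + s) = k - s by omega, nsmul_eq_mul]
    push_cast
    ring
  · omega
  · omega
  · simp

/-- With `l = m + 3`: by the Rodrigues forms of `fB` and `fD`, `fDtilde l` is `derivative^[m]` of
`(l ^ 2 * (l - 1) * (l - 2)!)⁻¹` times the left-hand side. -/
theorem rodrigues_kernel_identity (m : ℕ) :
    C (((m + 3 : ℕ) : R) + 2) *
        (C ((m + 3 : ℕ) : R) * derivative^[2] (X ^ (m + 2) * (1 - X) ^ (m + 3))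
          + C (((m + 3 : ℕ) : R) * ((m + 2 : ℕ) : R)) *
            derivative (X ^ (m + 3) * (1 - X) ^ (m + 1)))
      - C 2 * derivative^[3] (X ^ (m + 3) * (1 - X) ^ (m + 3))
    = C (((m + 3 : ℕ) : R) ^ 2 * ((m + 2 : ℕ) : R)) *
        (X ^ m * (1 - X) ^ m * (1 - 2 * X) *
          (C (((m + 3 : ℕ) : R) - 2) - C (3 * ((m + 3 : ℕ) : R) - 4) * X
            + C (3 * ((m + 3 : ℕ) : R) - 4) * X ^ 2)) := by
  simp only [Function.iterate_succ_apply', Function.iterate_zero_apply, derivative_mul,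
    derivative_pow, derivative_one, derivative_X, derivative_zero, derivative_natCast,
    derivative_ofNat, map_add, map_sub, map_mul, map_pow, map_natCast, map_ofNat, Nat.cast_add,
    Nat.cast_ofNat, Nat.reduceSubDiff, Nat.add_sub_cancel]
  ring

end CommRing

theorem coeff_fB (l k : ℕ) : (fB l).coeff k = (-1) ^ k * l.choose k * (l + k).choose k := by
  rw [fB, finsetSum_coeff]
  simp_rw [coeff_C_mul_X_pow]
  simp +contextual [Nat.choose_eq_zero_of_lt]

theorem coeff_fD (l k : ℕ) : (fD l).coeff k = (-1) ^ k *
      ((l.choose k * (l + k - 1).choose k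
        + if 2 ≤ k then (l - 2).choose (k - 2) * (l + k - 2).choose k else 0 : ℕ) : ℚ) := by
  rw [fD, finsetSum_coeff]
  simp_rw [coeff_C_mul_X_pow]
  simp +contextual [Nat.choose_eq_zero_of_lt]
  intro hlk _
  by_cases hl : l < 2
  · exact Or.inr (Nat.choose_eq_zero_of_lt (by omega))
  · exact Or.inl (Nat.choose_eq_zero_of_lt (by omega))

theorem fB_eq_rodrigues (n : ℕ) :
    fB n = C (1 / n ! : ℚ) * derivative^[n] (X ^ n * (1 - X) ^ n) := by
  ext k
  have h := coeff_iterate_derivative_X_pow_add_mul_one_sub_X_pow (R := ℚ) n 0 n k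
  rw [add_zero] at h
  rw [coeff_fB, coeff_C_mul, h, if_pos k.zero_le, Nat.sub_zero, add_comm n k,
    Nat.choose_symm_add]
  field_simp

theorem fD_add_two_eq_rodrigues (n : ℕ) :
    fD (n + 2) = C (1 / (n + 1)! : ℚ) * derivative^[n + 1] (X ^ (n + 1) * (1 - X) ^ (n + 2))
      + C (1 / n ! : ℚ) * derivative^[n] (X ^ (n + 2) * (1 - X) ^ n) := by
  ext k
  have h₁ := coeff_iterate_derivative_X_pow_add_mul_one_sub_X_pow (R := ℚ) (n + 1) 0 (n + 2) k
  have h₂ := coeff_iterate_derivative_X_pow_add_mul_one_sub_X_pow (R := ℚ) n 2 n k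
  rw [add_zero] at h₁
  rw [coeff_fD, coeff_add, coeff_C_mul, coeff_C_mul, h₁, h₂, if_pos k.zero_le, Nat.sub_zero,
    show n + 2 + k - 1 = k + (n + 1) by omega, show n + 2 - 2 = n by omega,
    show n + 2 + k - 2 = k + n by omega, Nat.choose_symm_add, Nat.choose_symm_add]
  split_ifs with hk
  · obtain ⟨j, rfl⟩ := Nat.exists_eq_add_of_le hk
    rw [Nat.add_sub_cancel_left]
    push_cast
    field_simp
    ring
  · push_cast
    field_simp
    ring

theorem fDtilde_rodrigues (l : ℕ) (hl : 5 ≤ l) :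
    fDtilde l = Polynomial.C (1 / ((l - 2).factorial : ℚ)) *
      (Polynomial.derivative^[l - 3]
        (Polynomial.X ^ (l - 3) * (1 - Polynomial.X) ^ (l - 3) * (1 - 2 * Polynomial.X) *
          (Polynomial.C ((l : ℚ) - 2) - Polynomial.C (3 * (l : ℚ) - 4) * Polynomial.X
            + Polynomial.C (3 * (l : ℚ) - 4) * Polynomial.X ^ 2))) := by
  obtain ⟨m, rfl⟩ : ∃ m, l = m + 3 := ⟨l - 3, by omega⟩
  have hfD : fD (m + 3) =
      C (1 / (m + 2)! : ℚ) * derivative^[m + 2] (X ^ (m + 2) * (1 - X) ^ (m + 3))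
        + C (1 / (m + 1)! : ℚ) * derivative^[m + 1] (X ^ (m + 3) * (1 - X) ^ (m + 1)) :=
    fD_add_two_eq_rodrigues (m + 1)
  have hK := congrArg (derivative^[m]) (rodrigues_kernel_identity (R := ℚ) m)
  simp only [iterate_derivative_sub, iterate_map_add, iterate_derivative_C_mul,
    ← Function.iterate_succ_apply, Nat.succ_eq_add_one, ← Function.iterate_add_apply] at hK
  rw [show m + 3 - 2 = m + 1 by omega, show m + 3 - 3 = m by omega, fDtilde, hfD, fB_eq_rodrigues]
  simp only [C_mul', smul_add, smul_smul] at hK ⊢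
  linear_combination (norm := skip)
    (1 / (((m + 3 : ℕ) : ℚ) ^ 2 * ((m + 2 : ℕ) : ℚ) * ((m + 1)! : ℚ))) • hK
  match_scalars <;> simp only [Nat.factorial_succ] <;> push_cast <;> field_simp <;> ring
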